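/- Let X = (⟨ψ̃_{ik} | ψ̃_{jl}⟩) be the Gram matrix of vectors ψ̃_{ik}, and let Y be the Gram matrix of another family φ̃_{il} generating the same operators ρ̃_i = Σ_k |ψ̃_{ik}⟩⟨ψ̃_{ik}| = Σ_l |φ̃_{il}⟩⟨φ̃_{il}| (with the same cardinalities). Then there is a block-diagonal unitary U = diag(U_0,…,U_m) with X = U† Y U; consequently, for block-diagonal Γ = diag(Γ_0,…,Γ_m) with Γ ≥ 0, the conditions X − Γ ≥ 0 and Γ ≥ 0 hold iff Y − UΓU† ≥ 0 and UΓU† ≥ 0 hold, and Tr(Γ_i) = Tr(U_i Γ_i U_i†) for each i. -/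

import Mathlib

open Matrix BigOperators ComplexOrder

private lemma toEuclideanLin_mul_apply {a b c : Type*} [Fintype a] [Fintype b] [Fintype c]
    [DecidableEq a] [DecidableEq b]
    (M : Matrix c b ℂ) (Nm : Matrix b a ℂ) (x : EuclideanSpace ℂ a) :
    Matrix.toEuclideanLin (M * Nm) x = Matrix.toEuclideanLin M (Matrix.toEuclideanLin Nm x) := by
  simp [Matrix.toEuclideanLin_apply, Matrix.mulVec_mulVec]

private lemma exists_unitary_of_gram_eq {nn NN : ℕ} (C D : Matrix (Fin nn) (Fin NN) ℂ)
    (h : Cᴴ * C = Dᴴ * D) :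
    ∃ V ∈ Matrix.unitaryGroup (Fin nn) ℂ, C = V * D := by
  classical
  set fC := Matrix.toEuclideanLin C with hfC
  set fD := Matrix.toEuclideanLin D with hfD
  have hinner : ∀ x y : EuclideanSpace ℂ (Fin NN),
      (inner ℂ (fC x) (fC y) : ℂ) = inner ℂ (fD x) (fD y) := by
    intro x y
    have e1 : (inner ℂ (fC x) (fC y) : ℂ) = inner ℂ x (Matrix.toEuclideanLin (Cᴴ * C) y) := by
      rw [toEuclideanLin_mul_apply, Matrix.toEuclideanLin_conjTranspose_eq_adjoint,
        LinearMap.adjoint_inner_right]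
    have e2 : (inner ℂ (fD x) (fD y) : ℂ) = inner ℂ x (Matrix.toEuclideanLin (Dᴴ * D) y) := by
      rw [toEuclideanLin_mul_apply, Matrix.toEuclideanLin_conjTranspose_eq_adjoint,
        LinearMap.adjoint_inner_right]
    rw [e1, e2, h]
  have hker : LinearMap.ker fD ≤ LinearMap.ker fC := by
    intro x hx
    have hx' : fD x = 0 := hx
    have hz : (inner ℂ (fC x) (fC x) : ℂ) = 0 := by rw [hinner, hx', inner_zero_right]
    exact LinearMap.mem_ker.mpr (inner_self_eq_zero.mp hz)
  set S := LinearMap.range fD with hS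
  let L0 : S →ₗ[ℂ] EuclideanSpace ℂ (Fin nn) :=
    (Submodule.liftQ (LinearMap.ker fD) fC hker) ∘ₗ (LinearMap.quotKerEquivRange fD).symm.toLinearMap
  have hL0 : ∀ (x : EuclideanSpace ℂ (Fin NN)) (hm : fD x ∈ S), L0 ⟨fD x, hm⟩ = fC x := by
    intro x hm
    show (Submodule.liftQ (LinearMap.ker fD) fC hker)
      ((LinearMap.quotKerEquivRange fD).symm ⟨fD x, hm⟩) = fC x
    rw [LinearMap.quotKerEquivRange_symm_apply_image]
    simp
  have hnorm : ∀ s : S, ‖L0 s‖ = ‖s‖ := by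
    rintro ⟨s, hs⟩
    obtain ⟨x, rfl⟩ := hs
    rw [hL0 x (LinearMap.mem_range_self fD x)]
    show ‖fC x‖ = ‖fD x‖
    rw [norm_eq_sqrt_re_inner (𝕜 := ℂ), norm_eq_sqrt_re_inner (𝕜 := ℂ), hinner]
  let L : S →ₗᵢ[ℂ] EuclideanSpace ℂ (Fin nn) := ⟨L0, hnorm⟩
  let Lext := L.extend
  set V : Matrix (Fin nn) (Fin nn) ℂ := Matrix.toEuclideanLin.symm Lext.toLinearMap with hVdef
  have hV : Matrix.toEuclideanLin V = Lext.toLinearMap := by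
    rw [hVdef]; exact LinearEquiv.apply_symm_apply _ _
  have hCVD : C = V * D := by
    apply Matrix.toEuclideanLin.injective
    refine LinearMap.ext fun x => ?_
    rw [toEuclideanLin_mul_apply, hV]
    show fC x = Lext (fD x)
    calc fC x = L0 ⟨fD x, LinearMap.mem_range_self fD x⟩ := (hL0 x _).symm
    _ = Lext (fD x) := (LinearIsometry.extend_apply L ⟨fD x, LinearMap.mem_range_self fD x⟩).symm
  have hUnit : Vᴴ * V = 1 := by
    apply Matrix.toEuclideanLin.injective
    refine LinearMap.ext fun x => ?_
    refine ext_inner_left ℂ fun y => ?_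
    rw [toEuclideanLin_mul_apply, Matrix.toEuclideanLin_conjTranspose_eq_adjoint,
      LinearMap.adjoint_inner_right, hV]
    have : ∀ z, Lext.toLinearMap z = Lext z := fun _ => rfl
    rw [this, this, Lext.inner_map_map]
    simp [Matrix.toEuclideanLin_apply, Matrix.one_mulVec]
  exact ⟨V, Matrix.mem_unitaryGroup_iff'.mpr (by rwa [Matrix.star_eq_conjTranspose]), hCVD⟩

private lemma blockDiagonal'_mul_stack {m NN : ℕ} {n : Fin (m + 1) → ℕ}
    (M : ∀ i, Matrix (Fin (n i)) (Fin (n i)) ℂ)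
    (Dm : ∀ i, Matrix (Fin (n i)) (Fin NN) ℂ) :
    Matrix.blockDiagonal' M * Matrix.of (fun (p : Σ i, Fin (n i)) a => Dm p.1 p.2 a)
      = Matrix.of (fun (p : Σ i, Fin (n i)) a => (M p.1 * Dm p.1) p.2 a) := by
  ext ⟨i, k⟩ a
  simp only [Matrix.mul_apply, Matrix.of_apply, ← Finset.univ_sigma_univ, Finset.sum_sigma]
  rw [Fintype.sum_eq_single i (fun j hj => Finset.sum_eq_zero fun l _ => by
    rw [Matrix.blockDiagonal'_apply_ne _ _ _ (Ne.symm hj), zero_mul])]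
  simp [Matrix.mul_apply]

theorem stmt_17 {N m : ℕ} (n : Fin (m + 1) → ℕ)
    (ψ φ : (i : Fin (m + 1)) → Fin (n i) → (Fin N → ℂ))
    -- both families give rise to the same operators ρ̃ᵢ
    (hsame : ∀ i, ∑ k, Matrix.vecMulVec (ψ i k) (star (ψ i k)) =
                  ∑ l, Matrix.vecMulVec (φ i l) (star (φ i l)))
    (X Y : Matrix ((i : Fin (m + 1)) × Fin (n i)) ((i : Fin (m + 1)) × Fin (n i)) ℂ)
    (hX : ∀ p q, X p q = star (ψ p.1 p.2) ⬝ᵥ ψ q.1 q.2)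
    (hY : ∀ p q, Y p q = star (φ p.1 p.2) ⬝ᵥ φ q.1 q.2) :
    ∃ U : Matrix ((i : Fin (m + 1)) × Fin (n i)) ((i : Fin (m + 1)) × Fin (n i)) ℂ,
      U ∈ Matrix.unitaryGroup ((i : Fin (m + 1)) × Fin (n i)) ℂ ∧
      (∀ p q, p.1 ≠ q.1 → U p q = 0) ∧
      X = Uᴴ * Y * U ∧
      ∀ Γ : Matrix ((i : Fin (m + 1)) × Fin (n i)) ((i : Fin (m + 1)) × Fin (n i)) ℂ,
        (∀ p q, p.1 ≠ q.1 → Γ p q = 0) →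
        (((X - Γ).PosSemidef ∧ Γ.PosSemidef) ↔
          ((Y - U * Γ * Uᴴ).PosSemidef ∧ (U * Γ * Uᴴ).PosSemidef)) ∧
        (∀ i, ∑ k, Γ ⟨i, k⟩ ⟨i, k⟩ = ∑ k, (U * Γ * Uᴴ) ⟨i, k⟩ ⟨i, k⟩) := by
  classical
  set C : ∀ i, Matrix (Fin (n i)) (Fin N) ℂ := fun i => Matrix.of fun k a => star (ψ i k) a with hC
  set D : ∀ i, Matrix (Fin (n i)) (Fin N) ℂ := fun i => Matrix.of fun k a => star (φ i k) a with hD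
  have hgram : ∀ i, (C i)ᴴ * (C i) = (D i)ᴴ * (D i) := by
    intro i
    ext a b
    have := congrFun (congrFun (hsame i) a) b
    simpa [Matrix.mul_apply, Matrix.conjTranspose_apply, Matrix.vecMulVec_apply,
      Matrix.sum_apply, hC, hD] using this
  choose V hVu hVC using fun i => exists_unitary_of_gram_eq (C i) (D i) (hgram i)
  set U := Matrix.blockDiagonal' (fun i => (V i)ᴴ) with hUdef
  have hUH : Uᴴ = Matrix.blockDiagonal' V := by
    rw [hUdef, Matrix.blockDiagonal'_conjTranspose]
    simp
  have hVV : ∀ i, V i * (V i)ᴴ = 1 := by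
    intro i
    have := Matrix.mem_unitaryGroup_iff.mp (hVu i)
    rwa [Matrix.star_eq_conjTranspose] at this
  have hV'V : ∀ i, (V i)ᴴ * V i = 1 := by
    intro i
    have := Matrix.mem_unitaryGroup_iff'.mp (hVu i)
    rwa [Matrix.star_eq_conjTranspose] at this
  have hUunit : U ∈ Matrix.unitaryGroup ((i : Fin (m + 1)) × Fin (n i)) ℂ := by
    rw [Matrix.mem_unitaryGroup_iff', Matrix.star_eq_conjTranspose, hUH, hUdef,
      ← Matrix.blockDiagonal'_mul]
    rw [show (fun i => V i * (V i)ᴴ) = (fun i => (1 : Matrix (Fin (n i)) (Fin (n i)) ℂ)) from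
      funext fun i => hVV i]
    exact Matrix.blockDiagonal'_one
  have hUU : U * Uᴴ = 1 := by
    have := Matrix.mem_unitaryGroup_iff.mp hUunit
    rwa [Matrix.star_eq_conjTranspose] at this
  have hU'U : Uᴴ * U = 1 := by
    have := Matrix.mem_unitaryGroup_iff'.mp hUunit
    rwa [Matrix.star_eq_conjTranspose] at this
  have hUoff : ∀ p q : Σ i, Fin (n i), p.1 ≠ q.1 → U p q = 0 := by
    rintro ⟨i, k⟩ ⟨j, l⟩ h
    exact Matrix.blockDiagonal'_apply_ne _ _ _ h
  set Ψ : Matrix ((i : Fin (m + 1)) × Fin (n i)) (Fin N) ℂ :=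
    Matrix.of (fun p a => C p.1 p.2 a) with hΨdef
  set Φ : Matrix ((i : Fin (m + 1)) × Fin (n i)) (Fin N) ℂ :=
    Matrix.of (fun p a => D p.1 p.2 a) with hΦdef
  have hXΨ : X = Ψ * Ψᴴ := by
    ext p q
    simp [hX, Matrix.mul_apply, Matrix.conjTranspose_apply, dotProduct, hΨdef, hC]
  have hYΦ : Y = Φ * Φᴴ := by
    ext p q
    simp [hY, Matrix.mul_apply, Matrix.conjTranspose_apply, dotProduct, hΦdef, hD]
  have hΨΦ : Ψ = Uᴴ * Φ := by
    rw [hUH, hΦdef, blockDiagonal'_mul_stack]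
    ext ⟨i, k⟩ a
    show C i k a = (V i * D i) k a
    rw [← hVC i]
  have hXY : X = Uᴴ * Y * U := by
    rw [hXΨ, hΨΦ, hYΦ, Matrix.conjTranspose_mul, Matrix.conjTranspose_conjTranspose]
    simp only [Matrix.mul_assoc]
  have hconj : ∀ M, U * (Uᴴ * M * U) * Uᴴ = M := fun M => by
    calc U * (Uᴴ * M * U) * Uᴴ = (U * Uᴴ) * M * (U * Uᴴ) := by simp only [Matrix.mul_assoc]
    _ = M := by rw [hUU]; simp
  have hconj' : ∀ M, Uᴴ * (U * M * Uᴴ) * U = M := fun M => by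
    calc Uᴴ * (U * M * Uᴴ) * U = (Uᴴ * U) * M * (Uᴴ * U) := by simp only [Matrix.mul_assoc]
    _ = M := by rw [hU'U]; simp
  refine ⟨U, hUunit, hUoff, hXY, ?_⟩
  intro Γ hΓ
  constructor
  · constructor
    · rintro ⟨h1, h2⟩
      have e : Y - U * Γ * Uᴴ = U * (X - Γ) * Uᴴ := by
        rw [hXY, Matrix.mul_sub, Matrix.sub_mul, hconj Y]
      exact ⟨e ▸ h1.mul_mul_conjTranspose_same U, h2.mul_mul_conjTranspose_same U⟩
    · rintro ⟨h1, h2⟩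
      have key : Uᴴ * (U * Γ * Uᴴ) * U = Γ := hconj' Γ
      have e : X - Γ = Uᴴ * (Y - U * Γ * Uᴴ) * U := by
        rw [hXY, Matrix.mul_sub, Matrix.sub_mul, key]
      exact ⟨e ▸ h1.conjTranspose_mul_mul_same U, key ▸ h2.conjTranspose_mul_mul_same U⟩
  · intro i
    set Γb : ∀ j, Matrix (Fin (n j)) (Fin (n j)) ℂ :=
      fun j => Matrix.of fun k l => Γ ⟨j, k⟩ ⟨j, l⟩ with hΓb
    have hΓbd : Γ = Matrix.blockDiagonal' Γb := by
      ext ⟨j, k⟩ ⟨j', l⟩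
      by_cases h : j = j'
      · subst h
        simp [hΓb]
      · rw [Matrix.blockDiagonal'_apply_ne _ _ _ h]
        exact hΓ _ _ h
    have hprod : U * Γ * Uᴴ = Matrix.blockDiagonal' (fun j => (V j)ᴴ * Γb j * V j) := by
      rw [hΓbd, hUdef, hUH, ← Matrix.blockDiagonal'_mul, ← Matrix.blockDiagonal'_mul]
    rw [hprod]
    simp only [Matrix.blockDiagonal'_apply_eq]
    have htr : ∑ k, ((V i)ᴴ * Γb i * V i) k k = Matrix.trace ((V i)ᴴ * Γb i * V i) := rfl
    rw [htr, Matrix.trace_mul_cycle, hVV i, Matrix.one_mul]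
    simp [Matrix.trace, Matrix.diag, hΓb]
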